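/- arXiv:0709.3939 — 2 statements merged into one kernel-verified Lean document; each statement's English description precedes it below -/
import Mathlib

section
/- If S is a good potential on a quiver Q (every arrow of Q appears in at least two terms of S and no path of length two appears in two distinct terms of S), then for every arrow a, the cyclic derivative ∂S/∂a is a linear combination of at least two paths which start with pairwise distinct arrows. -/
/-!
The terms of `∂S/∂a` are indexed by the occurrences of `a` in the cycles of `S`: the occurrence
at position `k` of a cycle `c` contributes the path obtained by cutting `c` open at that
position, which starts with the arrow `b` following `a` in `c`. Thus the term determines the
length-two subpath `ab` of `S` together with its position, and since `S` is good that subpath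
occurs only once. So distinct occurrences give terms with distinct first arrows, nothing
cancels, and there are at least two occurrences of `a`.
-/

/-- A quiver given by a vertex set, an arrow set and source/target maps. -/
structure Quiv where
  V : Type
  E : Type
  s : E → V
  t : E → V

namespace Quiv

/-- A path `a₁ a₂ ⋯ aₙ`, written with the composition-of-functions convention,
is a list of arrows such that the source of each arrow is the target of the next one. -/
def IsPath (q : Quiv) : List q.E → Prop
  | [] => True
  | [_] => True
  | a :: b :: l => q.s a = q.t b ∧ IsPath q (b :: l)

variable (q : Quiv)

/-- The source of a (nonempty) path. -/
def pSrc (l : List q.E) : Option q.V := l.getLast?.map q.s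

/-- The target of a (nonempty) path. -/
def pTgt (l : List q.E) : Option q.V := l.head?.map q.t

/-- A cycle is a nonempty path whose source equals its target. -/
def IsCycle (l : List q.E) : Prop := l ≠ [] ∧ q.IsPath l ∧ q.pSrc l = q.pTgt l

variable (K : Type) [Field K]

open Classical in
/-- The cyclic derivative of a single cycle `a₁ ⋯ aₙ` with respect to an arrow `x`:
`∑ₖ δ(x, aₖ) • a_{k+1} ⋯ aₙ a₁ ⋯ a_{k-1}`, as an element of the vector space
spanned by paths. -/
noncomputable def cycDerList (x : q.E) (l : List q.E) : List q.E →₀ K :=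
  ∑ k ∈ Finset.range l.length,
    if l[k]? = some x then Finsupp.single (l.drop (k + 1) ++ l.take k) 1 else 0

/-- The cyclic derivative of a potential (a linear combination of cycles)
with respect to an arrow `x`, extended linearly. -/
noncomputable def cycDer (x : q.E) (S : List q.E →₀ K) : List q.E →₀ K :=
  S.sum fun l c => c • q.cycDerList K x l

/-- Two potentials are cyclically equivalent if their difference lies in the span of
the elements `a₁ ⋯ a_{n-1} aₙ - a₂ ⋯ aₙ a₁` for cycles `a₁ ⋯ aₙ`. -/
def CycEquiv (S S' : List q.E →₀ K) : Prop :=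
  S - S' ∈ Submodule.span K
    {x : List q.E →₀ K | ∃ l : List q.E, q.IsCycle l ∧
      x = Finsupp.single l 1 - Finsupp.single (l.rotate 1) 1}


/-- The cyclically consecutive pairs of arrows of a cycle `a₁ ⋯ aₙ`:
`(a₁,a₂), …, (a_{n-1},aₙ), (aₙ,a₁)`; these record its subpaths of length two. -/
def cycPairs (l : List q.E) : List (q.E × q.E) := l.zip (l.rotate 1)

open Classical in
/-- A potential `S` is good if it is a linear combination of cycles, each arrow of the quiver
appears at least twice among its terms, and no subpath of length two appears twice. -/
def Good (S : List q.E →₀ K) : Prop :=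
  (∀ l ∈ S.support, q.IsCycle l) ∧
  (∀ e : q.E, 2 ≤ ∑ l ∈ S.support, l.count e) ∧
  (∀ p : q.E × q.E, (∑ l ∈ S.support, (q.cycPairs l).count p) ≤ 1)

end Quiv

open Finset

namespace List

variable {α : Type*}

/-- The path `a_{k+1} ⋯ aₙ a₁ ⋯ a_{k-1}` obtained by cutting the cycle `a₁ ⋯ aₙ` open at
its arrow `a_k` (indexed from `0` here). -/
def cutAt (l : List α) (k : ℕ) : List α := l.drop (k + 1) ++ l.take k

-- For `l = [x]` the cut path is empty and the default `x` is again `l[(k + 1) % 1]`.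
theorem getElem?_succ_mod_eq_head?_cutAt_getD {l : List α} {k : ℕ} {x : α}
    (hx : l[k]? = some x) : l[(k + 1) % l.length]? = some ((l.cutAt k).head?.getD x) := by
  have hk : k < l.length := (List.getElem?_eq_some_iff.1 hx).1
  rcases Nat.lt_or_ge (k + 1) l.length with hlt | hge
  · rw [Nat.mod_eq_of_lt hlt, cutAt, List.head?_append_of_ne_nil _ (by simpa using hlt),
      List.head?_drop, List.getElem?_eq_getElem hlt]
    rfl
  · have hlen : k + 1 = l.length := by omega
    rw [hlen, Nat.mod_self, cutAt, List.drop_eq_nil_of_le hge, List.nil_append, List.head?_take]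
    rcases Nat.eq_zero_or_pos k with rfl | hpos
    · simpa using hx
    · rw [if_neg hpos.ne', List.head?_eq_getElem?, List.getElem?_eq_getElem (by omega)]
      rfl

theorem card_filter_getElem?_eq_count [BEq α] [LawfulBEq α] [DecidableEq α] (l : List α)
    (a : α) : #{k ∈ Finset.range l.length | l[k]? = some a} = l.count a := by
  induction l with
  | nil => simp
  | cons x l ih =>
    rw [card_filter, List.length_cons, Finset.sum_range_succ', List.count_cons, ← ih, card_filter]
    by_cases h : x = a <;> simp [h]

end List

theorem eq_and_eq_of_sum_count_le_one {ι α : Type*} [BEq α] [LawfulBEq α] {s : Finset ι}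
    {L : ι → List α} {a : α} (h : ∑ i ∈ s, (L i).count a ≤ 1) {i j : ι} {m n : ℕ}
    (hi : i ∈ s) (hj : j ∈ s) (hm : (L i)[m]? = some a) (hn : (L j)[n]? = some a) :
    i = j ∧ m = n := by
  classical
  set T := s.sigma fun i => {k ∈ range (L i).length | (L i)[k]? = some a}
  have hT : #T ≤ 1 := by
    simpa only [T, card_sigma, List.card_filter_getElem?_eq_count] using h
  have mem_T {i : ι} {k : ℕ} (hi : i ∈ s) (hk : (L i)[k]? = some a) : ⟨i, k⟩ ∈ T := by
    simpa [T, hi] using ⟨(List.getElem?_eq_some_iff.1 hk).1, hk⟩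
  have := card_le_one.1 hT _ (mem_T hi hm) _ (mem_T hj hn)
  simpa using this

theorem Finsupp.support_sum_single_of_injOn {ι α M : Type*} [DecidableEq α] [AddCommMonoid M]
    {s : Finset ι} {f : ι → α} {c : ι → M} (hf : Set.InjOn f s) (hc : ∀ i ∈ s, c i ≠ 0) :
    (∑ i ∈ s, Finsupp.single (f i) (c i)).support = s.image f := by
  ext x
  simp only [Finsupp.mem_support_iff, Finsupp.finsetSum_apply, Finsupp.single_apply, mem_image]
  constructor
  · intro hx
    by_contra! hnot
    exact hx (sum_eq_zero fun i hi => if_neg (hnot i hi))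
  · rintro ⟨j, hj, rfl⟩
    rw [sum_eq_single_of_mem j hj fun i hi hij => if_neg fun h => hij (hf hi hj h), if_pos rfl]
    exact hc j hj

def occurrences {α M : Type*} [DecidableEq α] [Zero M] (S : List α →₀ M) (a : α) :
    Finset (Σ _ : List α, ℕ) :=
  S.support.sigma fun l => {k ∈ range l.length | l[k]? = some a}

section occurrences

variable {α M : Type*} [DecidableEq α] [Zero M] {S : List α →₀ M} {a : α}

theorem mem_occurrences {σ : Σ _ : List α, ℕ} :
    σ ∈ occurrences S a ↔ σ.1 ∈ S.support ∧ σ.1[σ.2]? = some a := by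
  simp only [occurrences, mem_sigma, mem_filter, mem_range, and_congr_right_iff,
    and_iff_right_iff_imp]
  exact fun _ h => (List.getElem?_eq_some_iff.1 h).1

theorem card_occurrences : #(occurrences S a) = ∑ l ∈ S.support, l.count a := by
  simp only [occurrences, card_sigma, List.card_filter_getElem?_eq_count]

end occurrences

namespace Quiv

variable {q : Quiv}

theorem cycPairs_getElem? {l : List q.E} {k : ℕ} {x : q.E} (hx : l[k]? = some x) :
    (q.cycPairs l)[k]? = some (x, (l.cutAt k).head?.getD x) := by
  have hk : k < l.length := (List.getElem?_eq_some_iff.1 hx).1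
  rw [cycPairs, List.getElem?_zip_eq_some, List.getElem?_rotate hk]
  exact ⟨hx, List.getElem?_succ_mod_eq_head?_cutAt_getD hx⟩

open Classical in
theorem cycDer_eq_sum_occurrences (K : Type) [Field K] (a : q.E) (S : List q.E →₀ K) :
    q.cycDer K a S = ∑ σ ∈ occurrences S a, Finsupp.single (σ.1.cutAt σ.2) (S σ.1) := by
  rw [cycDer, Finsupp.sum, occurrences, sum_sigma]
  refine sum_congr rfl fun l _ => ?_
  rw [cycDerList, smul_sum, sum_filter]
  refine sum_congr rfl fun k _ => ?_
  split_ifs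
  · rw [Finsupp.smul_single, smul_eq_mul, mul_one, List.cutAt]
  · rw [smul_zero]

theorem injOn_head?_cutAt {M : Type*} [Zero M] [DecidableEq q.E] {S : List q.E →₀ M}
    (hpairs : ∀ p : q.E × q.E, ∑ l ∈ S.support, (q.cycPairs l).count p ≤ 1) (a : q.E) :
    Set.InjOn (fun σ : Σ _ : List q.E, ℕ => (σ.1.cutAt σ.2).head?) (occurrences S a) := by
  rintro ⟨l₁, k₁⟩ h₁ ⟨l₂, k₂⟩ h₂ hhead
  obtain ⟨hl₁, ha₁⟩ := mem_occurrences.1 h₁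
  obtain ⟨hl₂, ha₂⟩ := mem_occurrences.1 h₂
  have hp₂ := cycPairs_getElem? ha₂
  dsimp only at hhead
  rw [← hhead] at hp₂
  obtain ⟨rfl, rfl⟩ := eq_and_eq_of_sum_count_le_one (hpairs _) hl₁ hl₂ (cycPairs_getElem? ha₁) hp₂
  rfl

end Quiv

open Quiv in
theorem good_potential_cyclic_derivative_distinct_heads_general
    (q : Quiv) (K : Type) [Field K] (S : List q.E →₀ K)
    (hGood : q.Good K S) (a : q.E) :
    2 ≤ (q.cycDer K a S).support.card ∧
    (∀ l₁ ∈ (q.cycDer K a S).support, ∀ l₂ ∈ (q.cycDer K a S).support,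
      l₁ ≠ l₂ → l₁.head? ≠ l₂.head?) := by
  classical
  have hinj := injOn_head?_cutAt hGood.2.2 a
  have hcut : Set.InjOn (fun σ : Σ _ : List q.E, ℕ => σ.1.cutAt σ.2) (occurrences S a) :=
    fun σ₁ h₁ σ₂ h₂ h => hinj h₁ h₂ (congrArg List.head? h)
  have hsupp : (q.cycDer K a S).support = (occurrences S a).image fun σ => σ.1.cutAt σ.2 := by
    rw [cycDer_eq_sum_occurrences]
    exact Finsupp.support_sum_single_of_injOn hcut
      fun σ hσ => Finsupp.mem_support_iff.1 (mem_occurrences.1 hσ).1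
  rw [hsupp]
  refine ⟨?_, ?_⟩
  · rw [card_image_of_injOn hcut, card_occurrences]
    exact hGood.2.1 a
  · simp only [mem_image]
    rintro _ ⟨σ₁, h₁, rfl⟩ _ ⟨σ₂, h₂, rfl⟩ hne hhead
    exact hne (by rw [hinj h₁ h₂ hhead])

open Quiv in
/-- If `S` is a good potential on a quiver `Q` (with no loops and no
2-cycles), then for every arrow `a` the cyclic derivative `∂S/∂a` is a linear combination of
at least two paths which start with pairwise distinct arrows. -/
theorem good_potential_cyclic_derivative_distinct_heads
    (q : Quiv) (K : Type) [Field K] (S : List q.E →₀ K)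
    (hNoLoops : ∀ e : q.E, q.s e ≠ q.t e)
    (hNoTwoCycles : ∀ e f : q.E, ¬(q.s e = q.t f ∧ q.s f = q.t e))
    (hGood : q.Good K S) (a : q.E) :
    2 ≤ (q.cycDer K a S).support.card ∧
    (∀ l₁ ∈ (q.cycDer K a S).support, ∀ l₂ ∈ (q.cycDer K a S).support,
      l₁ ≠ l₂ → l₁.head? ≠ l₂.head?) :=
  good_potential_cyclic_derivative_distinct_heads_general q K S hGood a
end

section
/- In the endomorphism algebra of the tilting complex T^k of a quiver with good potential, the relation corresponding to the dual arrow β* of an outgoing arrow β : k → i holds: the composition Σ_j [β α_j] ∘ α_j* is zero, where α_j* : T_k → T_j are the projections and [β α_j] : T_j → T_i are the compositions β α_j. -/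
namespace Quiv

variable (K : Type) [Field K] (q : Quiv) [Fintype q.V]

/-- The defining relations of the path algebra `KQ` as a quotient of the free algebra on
the vertices and arrows of `Q`: the vertices become a complete set of orthogonal
idempotents, and each arrow `e` satisfies `e = e_{t(e)} · e · e_{s(e)}`. -/
inductive PathRel : FreeAlgebra K (q.V ⊕ q.E) → FreeAlgebra K (q.V ⊕ q.E) → Prop
  | vtxIdem (i : q.V) : PathRel (FreeAlgebra.ι K (Sum.inl i) * FreeAlgebra.ι K (Sum.inl i))
      (FreeAlgebra.ι K (Sum.inl i))
  | vtxOrtho (i j : q.V) : i ≠ j →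
      PathRel (FreeAlgebra.ι K (Sum.inl i) * FreeAlgebra.ι K (Sum.inl j)) 0
  | vtxSum : PathRel (∑ i : q.V, FreeAlgebra.ι K (Sum.inl i)) 1
  | tgtMul (e : q.E) : PathRel
      (FreeAlgebra.ι K (Sum.inl (q.t e)) * FreeAlgebra.ι K (Sum.inr e))
      (FreeAlgebra.ι K (Sum.inr e))
  | srcMul (e : q.E) : PathRel
      (FreeAlgebra.ι K (Sum.inr e) * FreeAlgebra.ι K (Sum.inl (q.s e)))
      (FreeAlgebra.ι K (Sum.inr e))
  | tgtZero (e : q.E) (i : q.V) : i ≠ q.t e → PathRel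
      (FreeAlgebra.ι K (Sum.inl i) * FreeAlgebra.ι K (Sum.inr e)) 0
  | srcZero (e : q.E) (i : q.V) : i ≠ q.s e → PathRel
      (FreeAlgebra.ι K (Sum.inr e) * FreeAlgebra.ι K (Sum.inl i)) 0

/-- The path algebra `KQ` of the quiver `Q` over the field `K`. -/
def PathAlg := RingQuot (PathRel K q)

noncomputable instance : Ring (PathAlg K q) :=
  inferInstanceAs (Ring (RingQuot (PathRel K q)))

noncomputable instance : Algebra K (PathAlg K q) :=
  inferInstanceAs (Algebra K (RingQuot (PathRel K q)))

/-- The idempotent of the path algebra corresponding to a vertex. -/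
noncomputable def vtx (i : q.V) : PathAlg K q :=
  RingQuot.mkAlgHom K (PathRel K q) (FreeAlgebra.ι K (Sum.inl i))

/-- The element of the path algebra corresponding to an arrow. -/
noncomputable def arr (e : q.E) : PathAlg K q :=
  RingQuot.mkAlgHom K (PathRel K q) (FreeAlgebra.ι K (Sum.inr e))

/-- The element of the path algebra corresponding to a path `a₁ ⋯ aₙ`
(product of its arrows). -/
noncomputable def pathEl : List q.E → PathAlg K q
  | [] => 1
  | e :: l => arr K q e * pathEl l

/-- The element of the path algebra corresponding to a linear combination of paths. -/
noncomputable def el (S : List q.E →₀ K) : PathAlg K q :=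
  S.sum fun l c => c • pathEl K q l

/-- The relations of the Jacobian algebra: all cyclic derivatives of the potential `S`
are set to zero. -/
inductive JacobRel (S : List q.E →₀ K) : PathAlg K q → PathAlg K q → Prop
  | deriv (x : q.E) : JacobRel S (el K q (q.cycDer K x S)) 0

/-- The Jacobian algebra `J(Q,S) = KQ / ⟨∂S/∂x : x ∈ Q₁⟩` of a quiver with potential. -/
def Jacob (S : List q.E →₀ K) := RingQuot (JacobRel K q S)

noncomputable instance (S : List q.E →₀ K) : Ring (Jacob K q S) :=
  inferInstanceAs (Ring (RingQuot (JacobRel K q S)))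

noncomputable instance (S : List q.E →₀ K) : Algebra K (Jacob K q S) :=
  inferInstanceAs (Algebra K (RingQuot (JacobRel K q S)))

/-- The projection from the path algebra onto the Jacobian algebra. -/
noncomputable def jmk (S : List q.E →₀ K) : PathAlg K q →ₐ[K] Jacob K q S :=
  RingQuot.mkAlgHom K (JacobRel K q S)

end Quiv

open CategoryTheory CategoryTheory.Limits ZeroObject

/-- The two-term cochain complex `0 → X → Y → 0` with `X` in degree `0` and `Y` in
degree `1`, and differential `f`. -/
noncomputable def twoTerm {C : Type _} [Category C] [HasZeroMorphisms C] [HasZeroObject C]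
    (X Y : C) (f : X ⟶ Y) : CochainComplex C ℤ where
  X n := if n = 0 then X else if n = 1 then Y else 0
  d i j :=
    if h : i = 0 ∧ j = 1 then
      eqToHom (by rw [h.1]; simp) ≫ f ≫ eqToHom (by rw [h.2]; simp)
    else 0
  shape i j hij := by
    rw [dif_neg]
    rintro ⟨rfl, rfl⟩
    exact hij (by simp [ComplexShape.up])
  d_comp_d' i j k hij hjk := by
    by_cases h : i = 0 ∧ j = 1
    · obtain ⟨h0, h1⟩ := h
      subst h0; subst h1
      rw [dif_pos ⟨rfl, rfl⟩, dif_neg (fun hc => one_ne_zero hc.1), comp_zero]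
    · rw [dif_neg h, zero_comp]

namespace Quiv

variable (K : Type) [Field K] (q : _root_.Quiv) [Fintype q.V] [Fintype q.E]
  [DecidableEq q.V] [DecidableEq q.E] (S : List q.E →₀ K)

/-- The image of a vertex idempotent in the Jacobian algebra. -/
noncomputable def vtxJ (i : q.V) : Jacob K q S := jmk K q S (vtx K q i)

/-- The image of an arrow in the Jacobian algebra. -/
noncomputable def arrJ (e : q.E) : Jacob K q S := jmk K q S (arr K q e)

/-- The image of a path in the Jacobian algebra. -/
noncomputable def pathJ (l : List q.E) : Jacob K q S := jmk K q S (pathEl K q l)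

/-- The indecomposable projective right module `Pᵢ = eᵢ R` over the Jacobian algebra
`R = J(Q,S)`, realized as the `Rᵐᵒᵖ`-submodule of `R` spanned by the idempotent `eᵢ`
(right modules are modules over the opposite algebra). -/
noncomputable def P (i : q.V) : Submodule (Jacob K q S)ᵐᵒᵖ (Jacob K q S) :=
  Submodule.span (Jacob K q S)ᵐᵒᵖ {vtxJ K q S i}

/-- Left multiplication by an element of the Jacobian algebra, as an endomorphism of
the regular right module. -/
noncomputable def leftMul (x : Jacob K q S) :
    Jacob K q S →ₗ[(Jacob K q S)ᵐᵒᵖ] Jacob K q S where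
  toFun y := x * y
  map_add' a b := mul_add x a b
  map_smul' r y := by
    simp only [MulOpposite.smul_eq_mul_unop, RingHom.id_apply, mul_assoc]

/-- The set of arrows into a given vertex `k`. -/
def In (k : q.V) : Type := {e : q.E // q.t e = k}

instance (k : q.V) : Fintype (q.In k) :=
  inferInstanceAs (Fintype {e : q.E // q.t e = k})

instance (k : q.V) : DecidableEq (q.In k) :=
  inferInstanceAs (DecidableEq {e : q.E // q.t e = k})

lemma vtxJ_mul_arrJ (e : q.E) :
    vtxJ K q S (q.t e) * arrJ K q S e = arrJ K q S e := by
  have h : RingQuot.mkAlgHom K (PathRel K q)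
        (FreeAlgebra.ι K (Sum.inl (q.t e)) * FreeAlgebra.ι K (Sum.inr e))
      = RingQuot.mkAlgHom K (PathRel K q) (FreeAlgebra.ι K (Sum.inr e)) :=
    RingQuot.mkAlgHom_rel K (PathRel.tgtMul e)
  rw [map_mul] at h
  rw [vtxJ, arrJ, ← map_mul]
  exact congrArg (jmk K q S) h

lemma arrJ_mul_vtxJ (e : q.E) :
    arrJ K q S e * vtxJ K q S (q.s e) = arrJ K q S e := by
  have h : RingQuot.mkAlgHom K (PathRel K q)
        (FreeAlgebra.ι K (Sum.inr e) * FreeAlgebra.ι K (Sum.inl (q.s e)))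
      = RingQuot.mkAlgHom K (PathRel K q) (FreeAlgebra.ι K (Sum.inr e)) :=
    RingQuot.mkAlgHom_rel K (PathRel.srcMul e)
  rw [map_mul] at h
  rw [arrJ, vtxJ, ← map_mul]
  exact congrArg (jmk K q S) h

lemma arrJ_mem (e : q.E) (y : Jacob K q S) (hy : y ∈ P K q S (q.s e)) :
    arrJ K q S e * y ∈ P K q S (q.t e) := by
  rcases Submodule.mem_span_singleton.1 hy with ⟨c, rfl⟩
  refine Submodule.mem_span_singleton.2 ⟨MulOpposite.op (arrJ K q S e * c.unop), ?_⟩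
  simp only [MulOpposite.smul_eq_mul_unop, MulOpposite.unop_op]
  rw [← mul_assoc, vtxJ_mul_arrJ, ← mul_assoc, arrJ_mul_vtxJ]

/-- Left multiplication by an arrow `e : j → k`, as a map of right modules
`P_j → P_k` (the component of the presentation map of `T_k`). -/
noncomputable def arrMul (k : q.V) (e : q.In k) :
    ↥(P K q S (q.s e.1)) →ₗ[(Jacob K q S)ᵐᵒᵖ] ↥(P K q S k) :=
  (leftMul K q S (arrJ K q S e.1)).restrict (p := P K q S (q.s e.1)) (q := P K q S k)
    (fun y hy => by
      have := arrJ_mem K q S e.1 y hy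
      rwa [e.2] at this)

/-- The direct sum `⊕_{j → k} P_j` over all arrows into `k`. -/
noncomputable abbrev DS (k : q.V) :=
  DirectSum (q.In k) fun e => ↥(P K q S (q.s e.1))

/-- The presentation map `(αⱼ)ⱼ : ⊕_{j → k} P_j → P_k` whose components are left
multiplication by the arrows into `k`. -/
noncomputable def pres (k : q.V) :
    DS K q S k →ₗ[(Jacob K q S)ᵐᵒᵖ] ↥(P K q S k) :=
  DirectSum.toModule _ _ _ fun e => arrMul K q S k e

/-- The two-term complex `T_k = (⊕_{j → k} P_j → P_k)` of right modules over the
Jacobian algebra (with `⊕_{j → k} P_j` in degree `0` and `P_k` in degree `1`). -/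
noncomputable def Tk (k : q.V) : CochainComplex (ModuleCat (Jacob K q S)ᵐᵒᵖ) ℤ :=
  twoTerm (ModuleCat.of (Jacob K q S)ᵐᵒᵖ (DS K q S k))
    (ModuleCat.of (Jacob K q S)ᵐᵒᵖ (↥(P K q S k)))
    (ModuleCat.ofHom (pres K q S k))

/-- The stalk complex of a right module placed in degree `0`. -/
noncomputable def stalk (M : Type) [AddCommGroup M] [Module (Jacob K q S)ᵐᵒᵖ M] :
    CochainComplex (ModuleCat (Jacob K q S)ᵐᵒᵖ) ℤ :=
  (HomologicalComplex.single (ModuleCat (Jacob K q S)ᵐᵒᵖ) (ComplexShape.up ℤ) 0).obj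
    (ModuleCat.of (Jacob K q S)ᵐᵒᵖ M)

/-- The canonical functor from complexes to the homotopy category. -/
noncomputable def ho (X : CochainComplex (ModuleCat (Jacob K q S)ᵐᵒᵖ) ℤ) :
    HomotopyCategory (ModuleCat (Jacob K q S)ᵐᵒᵖ) (ComplexShape.up ℤ) :=
  (HomotopyCategory.quotient _ _).obj X

end Quiv

namespace Quiv

variable (K : Type) [Field K] (q : _root_.Quiv) [Fintype q.V] [Fintype q.E]
  [DecidableEq q.V] [DecidableEq q.E] (S : List q.E →₀ K)

lemma Tk_d_to_deg_zero (k : q.V) (i : ℤ) : (Tk K q S k).d i 0 = 0 := by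
  simp [Tk, twoTerm]
  rfl

/-- The dual arrow `αⱼ* : T_k → T_j` of an arrow `αⱼ : j → k`, given in degree `0` by the
projection `⊕_{j→k} P_j → P_j`. -/
noncomputable def alStar (k : q.V) (α : q.In k) :
    Tk K q S k ⟶ stalk K q S ↥(P K q S (q.s α.1)) :=
  HomologicalComplex.mkHomToSingle
    ((eqToHom (by rfl) :
        (Tk K q S k).X 0 ⟶ ModuleCat.of (Jacob K q S)ᵐᵒᵖ (DS K q S k)) ≫
      ModuleCat.ofHom (DirectSum.component (Jacob K q S)ᵐᵒᵖ (q.In k) _ α))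
    (fun i hi => by rw [Tk_d_to_deg_zero, Limits.zero_comp])

/-- Left multiplication by the path `β αⱼ` (for `β : k → i` and `αⱼ : j → k`) as a map of
right modules `P_j → P_i`. -/
noncomputable def mesonMul (k : q.V) (β : q.E) (hβ : q.s β = k) (α : q.In k) :
    ↥(P K q S (q.s α.1)) →ₗ[(Jacob K q S)ᵐᵒᵖ] ↥(P K q S (q.t β)) :=
  (leftMul K q S (arrJ K q S β * arrJ K q S α.1)).restrict (fun y hy => by
    show arrJ K q S β * arrJ K q S α.1 * y ∈ P K q S (q.t β)
    rw [mul_assoc]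
    have h1 := arrJ_mem K q S α.1 y hy
    have hP : P K q S (q.t α.1) = P K q S (q.s β) := by rw [α.2, hβ]
    exact arrJ_mem K q S β _ (hP ▸ h1))

/-- The mesonic arrow `[β αⱼ] : T_j → T_i`, as a map of stalk complexes. -/
noncomputable def meson (k : q.V) (β : q.E) (hβ : q.s β = k) (α : q.In k) :
    stalk K q S ↥(P K q S (q.s α.1)) ⟶ stalk K q S ↥(P K q S (q.t β)) :=
  (HomologicalComplex.single (ModuleCat (Jacob K q S)ᵐᵒᵖ) (ComplexShape.up ℤ) 0).map
    (ModuleCat.ofHom (mesonMul K q S k β hβ α))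

end Quiv

theorem HomologicalComplex.sum_f_apply {ι V κ : Type*} [Category V] [Preadditive V]
    {c : ComplexShape ι} {C D : HomologicalComplex V c} (s : Finset κ) (F : κ → (C ⟶ D))
    (i : ι) : (∑ a ∈ s, F a).f i = ∑ a ∈ s, (F a).f i :=
  map_sum (HomologicalComplex.Hom.fAddMonoidHom i) F s

namespace twoTerm

variable {C : Type*} [Category C] [HasZeroObject C] {X Y Z : C}

lemma d_zero_one [HasZeroMorphisms C] (f : X ⟶ Y) : (twoTerm X Y f).d 0 1 = f := by
  simp [twoTerm]

noncomputable def homotopyZeroOfFactorsThroughD [Preadditive C] (f : X ⟶ Y) (h : Y ⟶ Z)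
    (φ : twoTerm X Y f ⟶ (HomologicalComplex.single C (ComplexShape.up ℤ) 0).obj Z)
    (hφ : φ.f 0 = f ≫ h ≫ (HomologicalComplex.singleObjXSelf (ComplexShape.up ℤ) 0 Z).inv) :
    Homotopy φ 0 where
  hom i j := if hij : i = 1 ∧ j = 0 then
      ((twoTerm X Y f).XIsoOfEq hij.1).hom ≫ h ≫
        (HomologicalComplex.singleObjXIsoOfEq (ComplexShape.up ℤ) 0 Z j hij.2).inv
    else 0
  zero i j hji := dif_neg fun hij => hji (by simp [hij.1, hij.2])
  comm i := by
    by_cases hi : i = 0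
    · subst hi
      rw [dNext_eq _ (show (ComplexShape.up ℤ).Rel 0 1 by simp),
        prevD_eq _ (show (ComplexShape.up ℤ).Rel (-1) 0 by simp), dif_pos ⟨rfl, rfl⟩,
        dif_neg (by omega), d_zero_one, hφ]
      simp only [HomologicalComplex.XIsoOfEq_rfl, Iso.refl_hom, Category.id_comp,
        HomologicalComplex.single_obj_d, comp_zero, add_zero, HomologicalComplex.zero_f]
      rfl
    · exact (HomologicalComplex.isZero_single_obj_X _ _ _ _ hi).eq_of_tgt _ _

end twoTerm

namespace Quiv

variable (K : Type) [Field K] (q : _root_.Quiv) [Fintype q.V] [Fintype q.E]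
  [DecidableEq q.V] [DecidableEq q.E] (S : List q.E →₀ K)

noncomputable def outArrMul (k : q.V) (β : q.E) (hβ : q.s β = k) :
    ↥(P K q S k) →ₗ[(Jacob K q S)ᵐᵒᵖ] ↥(P K q S (q.t β)) :=
  (leftMul K q S (arrJ K q S β)).restrict fun y hy => arrJ_mem K q S β y (hβ ▸ hy)

lemma outArrMul_comp_pres (k : q.V) (β : q.E) (hβ : q.s β = k) :
    (outArrMul K q S k β hβ).comp (pres K q S k) =
      ∑ α : q.In k, (mesonMul K q S k β hβ α).comp
        (DirectSum.component (Jacob K q S)ᵐᵒᵖ (q.In k) (fun e => ↥(P K q S (q.s e.1))) α) := by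
  refine DirectSum.linearMap_ext _ fun α => LinearMap.ext fun y => ?_
  simp only [LinearMap.comp_apply, pres, DirectSum.toModule_lof]
  rw [LinearMap.sum_apply, Finset.sum_eq_single_of_mem α (Finset.mem_univ α) fun γ _ hγ => ?_]
  · rw [LinearMap.comp_apply, DirectSum.component.lof_self]
    exact Subtype.ext (mul_assoc _ _ _).symm
  · simp [DirectSum.component.of, Ne.symm hγ]

lemma sum_alStar_comp_meson_f_zero (k : q.V) (β : q.E) (hβ : q.s β = k) :
    (∑ α : q.In k, alStar K q S k α ≫ meson K q S k β hβ α).f 0 =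
      ModuleCat.ofHom (pres K q S k) ≫ ModuleCat.ofHom (outArrMul K q S k β hβ) ≫
        (HomologicalComplex.singleObjXSelf (ComplexShape.up ℤ) 0 _).inv := by
  have hterm : ∀ α : q.In k, (alStar K q S k α ≫ meson K q S k β hβ α).f 0 =
      ModuleCat.ofHom ((mesonMul K q S k β hβ α).comp (DirectSum.component _ _ _ α)) ≫
        (HomologicalComplex.singleObjXSelf (ComplexShape.up ℤ) 0 _).inv := by
    intro α
    rw [HomologicalComplex.comp_f, alStar, HomologicalComplex.mkHomToSingle_f, meson,
      HomologicalComplex.single_map_f_self]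
    simp only [Category.assoc]
    rfl
  rw [HomologicalComplex.sum_f_apply, Finset.sum_congr rfl fun α _ => hterm α]
  refine (Preadditive.sum_comp _ _ _).symm.trans ?_
  rw [← Category.assoc, ← ModuleCat.ofHom_comp, outArrMul_comp_pres]
  congr 1
  ext1
  simp only [ModuleCat.hom_sum, ModuleCat.hom_ofHom]

end Quiv

open Quiv in
theorem meson_comp_dual_arrows_sum_zero_general
    (K : Type) [Field K] (q : _root_.Quiv) [Fintype q.V] [Fintype q.E]
    [DecidableEq q.V] [DecidableEq q.E] (S : List q.E →₀ K)
    (k : q.V) (β : q.E) (hβ : q.s β = k) :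
    Nonempty (Homotopy
      (∑ α : q.In k, alStar K q S k α ≫ meson K q S k β hβ α)
      (0 : Tk K q S k ⟶ stalk K q S ↥(P K q S (q.t β)))) :=
  ⟨twoTerm.homotopyZeroOfFactorsThroughD _ _ _ (sum_alStar_comp_meson_f_zero K q S k β hβ)⟩

open Quiv in
/-- In the endomorphism algebra of the tilting complex `T^k` of a quiver
with good potential, the relation corresponding to the dual arrow `β*` of an outgoing arrow
`β : k → i` holds: the composition `Σⱼ [β αⱼ] ∘ αⱼ*` is zero in the homotopy category, where
`αⱼ* : T_k → T_j` are the projections and `[β αⱼ] : T_j → T_i` are the compositions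
`β αⱼ`. -/
theorem meson_comp_dual_arrows_sum_zero
    (K : Type) [Field K] (q : _root_.Quiv) [Fintype q.V] [Fintype q.E]
    [DecidableEq q.V] [DecidableEq q.E] (S : List q.E →₀ K)
    (hNoLoops : ∀ e : q.E, q.s e ≠ q.t e)
    (hNoTwoCycles : ∀ e f : q.E, ¬(q.s e = q.t f ∧ q.s f = q.t e))
    (hGood : q.Good K S)
    (k : q.V) (β : q.E) (hβ : q.s β = k) :
    Nonempty (Homotopy
      (∑ α : q.In k, alStar K q S k α ≫ meson K q S k β hβ α)
      (0 : Tk K q S k ⟶ stalk K q S ↥(P K q S (q.t β)))) :=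
  meson_comp_dual_arrows_sum_zero_general K q S k β hβ
end
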